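/- arXiv:2305.19880 — 2 statements merged into one kernel-verified Lean document; each statement's English description precedes it below -/
import Mathlib

section
/- Let a_0, ..., a_n be nonnegative reals and 0 < c ≤ 1/2 such that a_k ≤ a_0 + c·∑_{i=1}^{k} a_i for each k = 1, ..., n. Then a_k ≤ a_0·e^{2kc} for each k = 0, ..., n. -/
/-- Exponential form of the shifted discrete Gronwall inequality: if
`a k ≤ a 0 + c * ∑_{i=1}^{k} a i` for `1 ≤ k ≤ n` with `0 < c ≤ 1/2`, then
`a k ≤ a 0 * exp (2 k c)` for `0 ≤ k ≤ n`. -/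
theorem discrete_gronwall_shifted_exp (n : ℕ) (a : ℕ → ℝ) (c : ℝ)
    (hc0 : 0 < c) (hc : c ≤ 1 / 2)
    (ha : ∀ k, k ≤ n → 0 ≤ a k)
    (hrec : ∀ k, 1 ≤ k → k ≤ n → a k ≤ a 0 + c * ∑ i ∈ Finset.Icc 1 k, a i) :
    ∀ k, k ≤ n → a k ≤ a 0 * Real.exp (2 * k * c) := by
  have ha0 : 0 ≤ a 0 := ha 0 (Nat.zero_le n)
  have hc1 : (0:ℝ) < 1 - c := by linarith
  have key : ∀ k, k ≤ n → a 0 + c * ∑ i ∈ Finset.Icc 1 k, a i ≤ a 0 * (1 + 2*c)^k := by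
    intro k
    induction k with
    | zero => intro _; simp
    | succ m ih =>
      intro hm
      have hm' : m ≤ n := Nat.le_of_succ_le hm
      have ihm := ih hm'
      have hsum : ∑ i ∈ Finset.Icc 1 (m+1), a i = (∑ i ∈ Finset.Icc 1 m, a i) + a (m+1) := by
        rw [Finset.sum_Icc_succ_top (by omega)]
      have hrec1 := hrec (m+1) (by omega) hm
      rw [hsum] at hrec1 ⊢
      have hpow : (0:ℝ) ≤ (1+2*c)^m := by positivity
      have h1 : (1-c) * (a 0 + c * ((∑ i ∈ Finset.Icc 1 m, a i) + a (m+1))) ≤ a 0 * (1+2*c)^m := by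
        nlinarith [mul_le_mul_of_nonneg_left hrec1 hc0.le]
      have hb : 0 ≤ a 0 + c * (∑ i ∈ Finset.Icc 1 m, a i + a (m+1)) := by
        have hs : 0 ≤ ∑ i ∈ Finset.Icc 1 m, a i :=
          Finset.sum_nonneg fun i hi => ha i (le_trans (Finset.mem_Icc.mp hi).2 hm')
        have := ha (m+1) hm
        positivity
      have h2 : (1:ℝ) ≤ (1-c)*(1+2*c) := by nlinarith
      rw [pow_succ]
      nlinarith [mul_le_mul_of_nonneg_right h1 (by linarith : (0:ℝ) ≤ 1+2*c),
        mul_nonneg hb (by nlinarith : (0:ℝ) ≤ (1-c)*(1+2*c) - 1)]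
  intro k hk
  have hexp : (1+2*c)^k ≤ Real.exp (2*k*c) := by
    calc (1+2*c)^k ≤ (Real.exp (2*c))^k := by
          apply pow_le_pow_left₀ (by linarith) (by linarith [Real.add_one_le_exp (2*c)])
      _ = Real.exp (2*k*c) := by rw [← Real.exp_nat_mul]; ring_nf
  rcases Nat.eq_zero_or_pos k with rfl | hk1
  · simp
  · calc a k ≤ a 0 + c * ∑ i ∈ Finset.Icc 1 k, a i := hrec k hk1 hk
      _ ≤ a 0 * (1+2*c)^k := key k hk
      _ ≤ a 0 * Real.exp (2*k*c) := mul_le_mul_of_nonneg_left hexp ha0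
end

section
/- Let Q ⊂ ℝⁿ be a bounded Lipschitz domain, so that there are c_L > 0 and δ₀ > 0 with |B_δ(x) ∩ Q| ≥ c_L·δⁿ for all x ∈ Q̄ and 0 < δ ≤ δ₀. Let u : Q̄ → ℝ be continuous and Hölder continuous with exponent α ∈ (0,1] and constant c_α, with u > 0 on Q̄, and suppose ∫_Q u(x)^{-a} dx ≤ K for some a > n/α. Then min_{x∈Q̄} u(x) ≥ min( δ₀^α, ( K(1+c_α)^a / c_L )^{1/(n/α - a)} ). -/
open MeasureTheory

/-- Healey–Krömer type lower bound: on a bounded domain `Q` with the interior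
measure-density property `|B_δ(x) ∩ Q| ≥ c_L δⁿ`, a positive `α`-Hölder continuous
function `u` with `∫_Q u^{-a} ≤ K` (for `a > n/α`) is bounded below by
`min(δ₀^α, (K(1+c_α)^a/c_L)^{1/(n/α - a)})` on `Q̄`. -/
theorem healey_kromer_lower_bound (n : ℕ) (Q : Set (EuclideanSpace ℝ (Fin n)))
    (hQbdd : Bornology.IsBounded Q)
    (cL δ₀ : ℝ) (hcL : 0 < cL) (hδ₀ : 0 < δ₀)
    (hdensity : ∀ x ∈ closure Q, ∀ δ : ℝ, 0 < δ → δ ≤ δ₀ →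
      ENNReal.ofReal (cL * δ ^ n) ≤ volume (Metric.ball x δ ∩ Q))
    (u : EuclideanSpace ℝ (Fin n) → ℝ)
    (hu : ContinuousOn u (closure Q))
    (α cα : ℝ) (hα0 : 0 < α) (hα1 : α ≤ 1) (hcα : 0 ≤ cα)
    (hholder : ∀ x ∈ closure Q, ∀ y ∈ closure Q, |u x - u y| ≤ cα * ‖x - y‖ ^ α)
    (hupos : ∀ x ∈ closure Q, 0 < u x)
    (a K : ℝ) (ha : n / α < a) (hK : 0 < K)
    (hint : ∫ x in Q, (u x) ^ (-a) ≤ K) :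
    ∀ x ∈ closure Q,
      min (δ₀ ^ α) ((K * (1 + cα) ^ a / cL) ^ (1 / (n / α - a))) ≤ u x := by
  intro x hx
  have hQc : IsCompact (closure Q) := hQbdd.isCompact_closure
  obtain ⟨x₀, hx₀, hmin⟩ := hQc.exists_isMinOn ⟨x, hx⟩ hu
  have hmin' : ∀ y ∈ closure Q, u x₀ ≤ u y := fun y hy => hmin hy
  set m := u x₀ with hmdef
  have hm0 : 0 < m := hupos x₀ hx₀
  have ha_pos : 0 < a := lt_of_le_of_lt (div_nonneg (Nat.cast_nonneg n) hα0.le) ha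
  have h1cα : (0:ℝ) < 1 + cα := by linarith
  have key : min (δ₀ ^ α) ((K * (1 + cα) ^ a / cL) ^ (1 / (n / α - a))) ≤ m := by
    by_contra hcon
    push_neg at hcon
    have hmδ : m < δ₀ ^ α := lt_of_lt_of_le hcon (min_le_left _ _)
    have hmM : m < (K * (1 + cα) ^ a / cL) ^ (1 / (n / α - a)) :=
      lt_of_lt_of_le hcon (min_le_right _ _)
    set δ := m ^ (1/α) with hδdef
    have hδ0 : 0 < δ := Real.rpow_pos_of_pos hm0 _
    have hδα : δ ^ α = m := by
      rw [hδdef, ← Real.rpow_mul hm0.le, one_div, inv_mul_cancel₀ hα0.ne', Real.rpow_one]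
    have hδδ₀ : δ ≤ δ₀ := by
      have h := Real.rpow_le_rpow hm0.le hmδ.le (by positivity : (0:ℝ) ≤ 1/α)
      rwa [← Real.rpow_mul hδ₀.le, mul_one_div, div_self hα0.ne', Real.rpow_one] at h
    have hδn : δ ^ n = m ^ ((n:ℝ)/α) := by
      rw [hδdef, ← Real.rpow_natCast (m ^ (1/α)) n, ← Real.rpow_mul hm0.le, one_div,
        inv_mul_eq_div]
    -- a.e. membership in closure Q w.r.t. the restricted measure
    have haeQ : ∀ᵐ y ∂(volume.restrict Q), y ∈ closure Q := by
      rw [ae_iff]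
      have h1 : {y : EuclideanSpace ℝ (Fin n) | ¬ y ∈ closure Q} = (closure Q)ᶜ := rfl
      rw [h1, Measure.restrict_apply measurableSet_closure.compl]
      have h2 : (closure Q)ᶜ ∩ Q = ∅ := by
        ext y
        simp only [Set.mem_inter_iff, Set.mem_compl_iff, Set.mem_empty_iff_false, iff_false,
          not_and]
        exact fun hyc hyQ => hyc (subset_closure hyQ)
      rw [h2, measure_empty]
    -- integrability of u ^ (-a) on Q
    have hcont : ContinuousOn (fun y => u y ^ (-a)) (closure Q) :=
      hu.rpow_const (fun y hy => Or.inl (hupos y hy).ne')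
    have haesm : AEStronglyMeasurable (fun y => u y ^ (-a)) (volume.restrict Q) :=
      (hcont.aestronglyMeasurable measurableSet_closure).mono_measure
        (Measure.restrict_mono subset_closure le_rfl)
    haveI : IsFiniteMeasure (volume.restrict Q) :=
      ⟨by rw [Measure.restrict_apply_univ]; exact hQbdd.measure_lt_top⟩
    have hint_f : Integrable (fun y => u y ^ (-a)) (volume.restrict Q) := by
      refine Integrable.mono' (integrable_const (m ^ (-a))) haesm ?_
      filter_upwards [haeQ] with y hy
      rw [Real.norm_eq_abs, abs_of_pos (Real.rpow_pos_of_pos (hupos y hy) _)]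
      exact Real.rpow_le_rpow_of_nonpos hm0 (hmin' y hy) (neg_nonpos.mpr ha_pos.le)
    -- upper bound for u on the ball
    have hub : ∀ y ∈ Metric.ball x₀ δ ∩ closure Q, u y ≤ m * (1 + cα) := by
      rintro y ⟨hyB, hyc⟩
      have h1 := hholder x₀ hx₀ y hyc
      have h2 : ‖x₀ - y‖ ^ α ≤ δ ^ α := by
        apply Real.rpow_le_rpow (norm_nonneg _) _ hα0.le
        rw [← dist_eq_norm, dist_comm]
        exact (Metric.mem_ball.mp hyB).le
      have h3 := (abs_le.mp h1).1
      have h4 : cα * ‖x₀ - y‖ ^ α ≤ cα * (δ ^ α) := mul_le_mul_of_nonneg_left h2 hcα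
      rw [hδα] at h4
      nlinarith
    -- lower bound on the set integral by a constant
    have hae_ge : ∀ᵐ y ∂((volume.restrict Q).restrict (Metric.ball x₀ δ)),
        (m * (1 + cα)) ^ (-a) ≤ u y ^ (-a) := by
      filter_upwards [ae_restrict_mem measurableSet_ball,
        haeQ.filter_mono (ae_mono Measure.restrict_le_self)] with y hyB hyc
      exact Real.rpow_le_rpow_of_nonpos (hupos y hyc) (hub y ⟨hyB, hyc⟩)
        (neg_nonpos.mpr ha_pos.le)
    have hstep1 : (m * (1 + cα)) ^ (-a) *
        ((volume.restrict Q) (Metric.ball x₀ δ)).toReal ≤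
        ∫ y in Metric.ball x₀ δ, u y ^ (-a) ∂(volume.restrict Q) := by
      have h := integral_mono_ae (integrable_const ((m * (1 + cα)) ^ (-a)))
        (hint_f.restrict) hae_ge
      rwa [integral_const, measureReal_def, Measure.restrict_apply_univ, smul_eq_mul, mul_comm] at h
    have hstep2 : ∫ y in Metric.ball x₀ δ, u y ^ (-a) ∂(volume.restrict Q) ≤
        ∫ y, u y ^ (-a) ∂(volume.restrict Q) := by
      refine setIntegral_le_integral hint_f ?_
      filter_upwards [haeQ] with y hy
      exact (Real.rpow_pos_of_pos (hupos y hy) _).le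
    have hmeas : cL * δ ^ n ≤ ((volume.restrict Q) (Metric.ball x₀ δ)).toReal := by
      rw [Measure.restrict_apply measurableSet_ball]
      have h1 := hdensity x₀ hx₀ δ hδ0 hδδ₀
      have h2 : volume (Metric.ball x₀ δ ∩ Q) ≠ ⊤ :=
        (lt_of_le_of_lt (measure_mono Set.inter_subset_left) measure_ball_lt_top).ne
      calc cL * δ ^ n = (ENNReal.ofReal (cL * δ ^ n)).toReal :=
            (ENNReal.toReal_ofReal (by positivity)).symm
        _ ≤ _ := ENNReal.toReal_mono h2 h1
    have hP : (0:ℝ) < (m * (1 + cα)) ^ (-a) := Real.rpow_pos_of_pos (by positivity) _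
    have hchain : (m * (1 + cα)) ^ (-a) * (cL * δ ^ n) ≤ K := by
      calc (m * (1 + cα)) ^ (-a) * (cL * δ ^ n)
          ≤ (m * (1 + cα)) ^ (-a) * ((volume.restrict Q) (Metric.ball x₀ δ)).toReal :=
            mul_le_mul_of_nonneg_left hmeas hP.le
        _ ≤ ∫ y in Metric.ball x₀ δ, u y ^ (-a) ∂(volume.restrict Q) := hstep1
        _ ≤ ∫ y, u y ^ (-a) ∂(volume.restrict Q) := hstep2
        _ ≤ K := hint
    -- rearrange: m ^ (n/α - a) ≤ K (1+cα)^a / cL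
    have hexp : (n:ℝ)/α - a < 0 := sub_neg.mpr ha
    have hsplit : (m * (1 + cα)) ^ (-a) = m ^ (-a) * (1 + cα) ^ (-a) :=
      Real.mul_rpow hm0.le h1cα.le
    have hmm : m ^ (-a) * m ^ ((n:ℝ)/α) = m ^ ((n:ℝ)/α - a) := by
      rw [← Real.rpow_add hm0]; ring_nf
    have hXR : m ^ ((n:ℝ)/α - a) ≤ K * (1 + cα) ^ a / cL := by
      have hc1 : (1 + cα) ^ (-a) * (1 + cα) ^ a = 1 := by
        rw [← Real.rpow_add h1cα]; simp
      have h5 : cL * ((1 + cα) ^ (-a) * m ^ ((n:ℝ)/α - a)) ≤ K := by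
        rw [hδn] at hchain
        calc cL * ((1 + cα) ^ (-a) * m ^ ((n:ℝ)/α - a))
            = (m * (1 + cα)) ^ (-a) * (cL * m ^ ((n:ℝ)/α)) := by
              rw [hsplit, ← hmm]; ring
          _ ≤ K := hchain
      have hcp : (0:ℝ) < (1 + cα) ^ a := Real.rpow_pos_of_pos h1cα _
      rw [le_div_iff₀ hcL]
      calc m ^ ((n:ℝ)/α - a) * cL
          = (cL * ((1 + cα) ^ (-a) * m ^ ((n:ℝ)/α - a))) * (1 + cα) ^ a := by
            linear_combination (-(cL * m ^ ((n:ℝ)/α - a))) * hc1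
        _ ≤ K * (1 + cα) ^ a := mul_le_mul_of_nonneg_right h5 hcp.le
    -- conclude m ≥ M, contradiction
    have hM : (K * (1 + cα) ^ a / cL) ^ (1 / ((n:ℝ)/α - a)) ≤ m := by
      have hX0 : (0:ℝ) < m ^ ((n:ℝ)/α - a) := Real.rpow_pos_of_pos hm0 _
      have h := Real.rpow_le_rpow_of_nonpos hX0 hXR
        (le_of_lt (one_div_neg.mpr hexp))
      rwa [← Real.rpow_mul hm0.le, mul_one_div, div_self hexp.ne, Real.rpow_one] at h
    exact absurd hmM (not_lt.mpr hM)
  exact le_trans key (hmin' x hx)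
end
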